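/- arXiv:1109.1549 — 2 statements merged into one kernel-verified Lean document; each statement's English description precedes it below -/
import Mathlib

section
/- For the Ising model on a finite graph G at inverse temperature β > 0 with free boundary conditions, the two-point correlation satisfies μ[σ_a σ_b] = (Σ_{ω ∈ E_G(a,b)} tanh(β)^{|ω|}) / (Σ_{ω ∈ E_G} tanh(β)^{|ω|}), where E_G(a,b) is the set of edge subsets in which every vertex has even degree except a and b, which have odd degree. -/
open Finset

/-- The spin product `σ_x σ_y` along an edge of a graph, for spins `σ : V → {±1}`
(encoded as units of `ℤ`), viewed as a real number. -/
def edgeSpin {V : Type*} (σ : V → ℤˣ) : Sym2 V → ℝ :=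
  Sym2.lift ⟨fun x y => (((σ x * σ y : ℤˣ) : ℤ) : ℝ), by
    intro x y; simp [mul_comm]⟩

/-!
Since `σ_x σ_y = ±1`, each Boltzmann factor is `exp (β σ_x σ_y) = cosh β (1 + tanh β σ_x σ_y)`.
Expanding the product over the edges writes `Σ_σ σ_A exp (β H(σ))` as `cosh β ^ |E|` times a sum
over edge sets `ω` of `tanh β ^ |ω| Σ_σ ∏_v σ_v ^ (deg_ω v + [v ∈ A])`, and the spin sum is
`2 ^ |V|` when every exponent is even and `0` otherwise. So only the `ω` whose odd-degree vertices
are exactly `A` survive, and the common factor `2 ^ |V| cosh β ^ |E|` cancels in the ratio.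
-/

open Real

lemma exp_mul_eq_cosh_mul_one_add_tanh_mul (β : ℝ) {s : ℝ} (hs : s = 1 ∨ s = -1) :
    exp (β * s) = cosh β * (1 + tanh β * s) := by
  have hcosh : cosh β ≠ 0 := (cosh_pos β).ne'
  rcases hs with rfl | rfl
  · rw [mul_one, mul_one, ← cosh_add_sinh, tanh_eq_sinh_div_cosh]; field_simp
  · rw [mul_neg_one, mul_neg_one, ← cosh_sub_sinh, tanh_eq_sinh_div_cosh]; field_simp; ring

lemma exp_mul_sum_eq_cosh_pow_mul_sum_powerset {ι : Type*} (β : ℝ) (s : Finset ι) {f : ι → ℝ}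
    (hf : ∀ i ∈ s, f i = 1 ∨ f i = -1) :
    exp (β * ∑ i ∈ s, f i) = cosh β ^ #s * ∑ t ∈ s.powerset, tanh β ^ #t * ∏ i ∈ t, f i := by
  rw [mul_sum, exp_sum, prod_congr rfl fun i hi => exp_mul_eq_cosh_mul_one_add_tanh_mul β (hf i hi),
    prod_mul_distrib, prod_const, prod_one_add]
  simp_rw [prod_mul_distrib, prod_const]

lemma sum_units_int_pow (d : ℕ) : ∑ s : ℤˣ, ((s : ℤ) : ℝ) ^ d = if Even d then 2 else 0 := by
  have huniv : (univ : Finset ℤˣ) = {1, -1} := by ext u; simp [Int.units_eq_one_or u]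
  rw [huniv, sum_pair (by decide)]
  rcases Nat.even_or_odd d with h | h
  · simp [h.neg_pow, h, one_add_one_eq_two]
  · simp [h.neg_pow, Nat.not_even_iff_odd.mpr h]

lemma even_add_ite_iff_odd_iff (k : ℕ) (p : Prop) [Decidable p] :
    Even (k + if p then 1 else 0) ↔ (Odd k ↔ p) := by
  by_cases hp : p <;> simp [hp, Nat.even_add_one]

section

variable {V : Type*}

lemma edgeSpin_mk (σ : V → ℤˣ) (x y : V) :
    edgeSpin σ s(x, y) = ((σ x : ℤ) : ℝ) * ((σ y : ℤ) : ℝ) := by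
  simp [edgeSpin]

lemma edgeSpin_eq_one_or_neg_one (σ : V → ℤˣ) (e : Sym2 V) :
    edgeSpin σ e = 1 ∨ edgeSpin σ e = -1 := by
  induction e using Sym2.ind with | _ x y =>
  rcases Int.units_eq_one_or (σ x * σ y) with h | h <;>
    simp [show edgeSpin σ s(x, y) = (((σ x * σ y : ℤˣ) : ℤ) : ℝ) from rfl, h]

variable [DecidableEq V]

lemma edgeSpin_eq_prod (σ : V → ℤˣ) {e : Sym2 V} (he : ¬ e.IsDiag) :
    edgeSpin σ e = ∏ v ∈ e.toFinset, ((σ v : ℤ) : ℝ) := by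
  induction e using Sym2.ind with | _ x y =>
  rw [edgeSpin_mk, Sym2.toFinset_mk_eq, prod_pair (by simpa using he)]

variable [Fintype V]

lemma prod_pow_ite_mem {M : Type*} [CommMonoid M] (f : V → M) (A : Finset V) :
    ∏ v, f v ^ (if v ∈ A then 1 else 0) = ∏ v ∈ A, f v := by
  simp [pow_ite]

lemma prod_edgeSpin (σ : V → ℤˣ) {ω : Finset (Sym2 V)} (hω : ∀ e ∈ ω, ¬ e.IsDiag) :
    ∏ e ∈ ω, edgeSpin σ e = ∏ v, ((σ v : ℤ) : ℝ) ^ #(ω.filter (v ∈ ·)) := by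
  calc ∏ e ∈ ω, edgeSpin σ e
      = ∏ e ∈ ω, ∏ v, ((σ v : ℤ) : ℝ) ^ (if v ∈ e then 1 else 0) := by
        refine prod_congr rfl fun e he => ?_
        simp_rw [edgeSpin_eq_prod σ (hω e he), ← Sym2.mem_toFinset, prod_pow_ite_mem]
    _ = ∏ v, ((σ v : ℤ) : ℝ) ^ #(ω.filter (v ∈ ·)) := by
        rw [prod_comm]
        simp_rw [prod_pow_eq_pow_sum, card_filter]

lemma sum_prod_units_int_pow (d : V → ℕ) :
    ∑ σ : V → ℤˣ, ∏ v, ((σ v : ℤ) : ℝ) ^ d v =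
      if ∀ v, Even (d v) then 2 ^ Fintype.card V else 0 := by
  rw [← Fintype.prod_sum fun v (s : ℤˣ) => ((s : ℤ) : ℝ) ^ d v]
  simp_rw [sum_units_int_pow, Fintype.prod_ite_zero, prod_const, card_univ]

theorem sum_prod_mul_exp_eq_sum_tanh_pow (G : SimpleGraph V) [DecidableRel G.Adj] (β : ℝ)
    (A : Finset V) :
    ∑ σ : V → ℤˣ, (∏ v ∈ A, ((σ v : ℤ) : ℝ)) * exp (β * ∑ e ∈ G.edgeFinset, edgeSpin σ e) =
      cosh β ^ #G.edgeFinset * 2 ^ Fintype.card V *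
        ∑ ω ∈ G.edgeFinset.powerset with ∀ v, (Odd #(ω.filter (v ∈ ·)) ↔ v ∈ A), tanh β ^ #ω := by
  have hsum : ∀ ω ∈ G.edgeFinset.powerset,
      ∑ σ : V → ℤˣ, (∏ v ∈ A, ((σ v : ℤ) : ℝ)) * ∏ e ∈ ω, edgeSpin σ e =
        if ∀ v, (Odd #(ω.filter (v ∈ ·)) ↔ v ∈ A) then 2 ^ Fintype.card V else 0 := by
    intro ω hω
    have hloop : ∀ e ∈ ω, ¬ e.IsDiag := fun e he =>
      G.not_isDiag_of_mem_edgeSet (SimpleGraph.mem_edgeFinset.mp (mem_powerset.mp hω he))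
    simp_rw [prod_edgeSpin _ hloop, ← prod_pow_ite_mem _ A, ← prod_mul_distrib, ← pow_add,
      sum_prod_units_int_pow, add_comm _ #(ω.filter _), even_add_ite_iff_odd_iff]
  calc _ = ∑ σ : V → ℤˣ, cosh β ^ #G.edgeFinset * ∑ ω ∈ G.edgeFinset.powerset,
          tanh β ^ #ω * ((∏ v ∈ A, ((σ v : ℤ) : ℝ)) * ∏ e ∈ ω, edgeSpin σ e) := by
        refine sum_congr rfl fun σ _ => ?_
        rw [exp_mul_sum_eq_cosh_pow_mul_sum_powerset β _ fun e _ => edgeSpin_eq_one_or_neg_one σ e,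
          mul_left_comm, mul_sum]
        simp_rw [mul_left_comm]
    _ = cosh β ^ #G.edgeFinset * ∑ ω ∈ G.edgeFinset.powerset,
          tanh β ^ #ω *
            if ∀ v, (Odd #(ω.filter (v ∈ ·)) ↔ v ∈ A) then 2 ^ Fintype.card V else 0 := by
        rw [← mul_sum, sum_comm]
        simp_rw [← mul_sum]
        rw [sum_congr rfl fun ω hω => congrArg _ (hsum ω hω)]
    _ = _ := by
        rw [sum_filter, mul_assoc, mul_sum, mul_sum, mul_sum]
        exact sum_congr rfl fun ω _ => by split_ifs <;> ring

end

theorem ising_two_point_high_temperature_expansion_general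
    {V : Type*} [Fintype V] [DecidableEq V] (G : SimpleGraph V) [DecidableRel G.Adj]
    (β : ℝ) (a b : V) (hab : a ≠ b) :
    (∑ σ : V → ℤˣ, (((σ a * σ b : ℤˣ) : ℤ) : ℝ) *
        Real.exp (β * ∑ e ∈ G.edgeFinset, edgeSpin σ e)) /
      (∑ σ : V → ℤˣ, Real.exp (β * ∑ e ∈ G.edgeFinset, edgeSpin σ e)) =
    (∑ ω ∈ G.edgeFinset.powerset.filter
        (fun ω => ∀ v : V,
          if v = a ∨ v = b then Odd ((ω.filter (fun e => v ∈ e)).card)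
          else Even ((ω.filter (fun e => v ∈ e)).card)),
        Real.tanh β ^ ω.card) /
    (∑ ω ∈ G.edgeFinset.powerset.filter
        (fun ω => ∀ v : V, Even ((ω.filter (fun e => v ∈ e)).card)),
        Real.tanh β ^ ω.card) := by
  have hnum := sum_prod_mul_exp_eq_sum_tanh_pow G β {a, b}
  have hden := sum_prod_mul_exp_eq_sum_tanh_pow G β ∅
  simp only [prod_pair hab, prod_empty, one_mul, notMem_empty, iff_false, Nat.not_odd_iff_even,
    mem_insert, mem_singleton] at hnum hden
  push_cast
  rw [hnum, hden, mul_div_mul_left _ _ (by positivity)]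
  congr 2
  refine filter_congr fun ω _ => forall_congr' fun v => ?_
  split_ifs with h <;> simp [h, Nat.not_odd_iff_even]

/-- **High temperature expansion of the two-point function.**
For the Ising model on a finite graph `G` at inverse temperature `β > 0` with free
boundary conditions, the correlation `μ[σ_a σ_b]` equals
`(Σ_{ω ∈ E_G(a,b)} tanh(β)^{|ω|}) / (Σ_{ω ∈ E_G} tanh(β)^{|ω|})`,
where `E_G(a,b)` consists of edge subsets in which every vertex has even degree except
`a` and `b`, which have odd degree, and `E_G` consists of even edge subsets. -/
theorem ising_two_point_high_temperature_expansion
    {V : Type*} [Fintype V] [DecidableEq V] (G : SimpleGraph V) [DecidableRel G.Adj]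
    (β : ℝ) (hβ : 0 < β) (a b : V) (hab : a ≠ b) :
    (∑ σ : V → ℤˣ, (((σ a * σ b : ℤˣ) : ℤ) : ℝ) *
        Real.exp (β * ∑ e ∈ G.edgeFinset, edgeSpin σ e)) /
      (∑ σ : V → ℤˣ, Real.exp (β * ∑ e ∈ G.edgeFinset, edgeSpin σ e)) =
    (∑ ω ∈ G.edgeFinset.powerset.filter
        (fun ω => ∀ v : V,
          if v = a ∨ v = b then Odd ((ω.filter (fun e => v ∈ e)).card)
          else Even ((ω.filter (fun e => v ∈ e)).card)),
        Real.tanh β ^ ω.card) /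
    (∑ ω ∈ G.edgeFinset.powerset.filter
        (fun ω => ∀ v : V, Even ((ω.filter (fun e => v ∈ e)).card)),
        Real.tanh β ^ ω.card) :=
  ising_two_point_high_temperature_expansion_general G β a b hab
end

section
/- Let f : Ω_δ^⋄ → ℂ be s-holomorphic and H the associated primitive of Im(f²) defined on black and white faces (H(b) - H(w) = δ|P_{ℓ(e)}[f(x)]|² across each medial edge). Then the restriction H^• of H to black faces is discrete subharmonic and the restriction H^∘ to white faces is discrete superharmonic: for every interior black face B, the sum over the four neighboring black faces B' of (H^•(B') - H^•(B)) is ≥ 0, and the analogous sum for white faces is ≤ 0. -/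
/-- Orthogonal projection of `z ∈ ℂ` onto the line `u·ℝ` through the origin
(for `|u| = 1`): `P_{uℝ}(z) = (z + u² z̄)/2`. -/
noncomputable def lineProj (u z : ℂ) : ℂ := (z + u ^ 2 * (starRingEnd ℂ) z) / 2

/-- Direction spanning the line `ℓ(e)` of the medial edge separating the faces `(m,n)`
and `(m+1,n)` of the medial lattice (faces indexed by `ℤ²`, `(m,n)` black iff `m + n`
even; edges oriented counterclockwise around black faces). -/
noncomputable def uVertEdge (m n : ℤ) : ℂ :=
  if Even (m + n) then Complex.exp (-(Real.pi / 4) * Complex.I)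
  else Complex.exp (Real.pi / 4 * Complex.I)

/-- Direction spanning the line `ℓ(e)` of the medial edge separating the faces `(m,n)`
and `(m,n+1)`. -/
noncomputable def uHorEdge (m n : ℤ) : ℂ := if Even (m + n) then Complex.I else 1

/-- `H` is a primitive of `Im(f² dz)`: across each medial edge `e = [xy]` separating a
black face `b` from a white face `w`, `H(b) - H(w) = δ |P_{ℓ(e)}[f(x)]|²`. -/
noncomputable def IsPrimitiveOfImFSq (δ : ℝ) (f : ℤ × ℤ → ℂ) (H : ℤ × ℤ → ℝ) : Prop :=
  ∀ m n : ℤ,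
    ((if Even (m + n) then H (m, n) - H (m + 1, n) else H (m + 1, n) - H (m, n))
      = δ * ‖lineProj (uVertEdge m n) (f (m, n))‖ ^ 2) ∧
    ((if Even (m + n) then H (m, n) - H (m, n + 1) else H (m, n + 1) - H (m, n))
      = δ * ‖lineProj (uHorEdge m n) (f (m, n))‖ ^ 2)

/-!
Projecting onto the four lines `ℝ`, `iℝ`, `e^{±iπ/4}ℝ` turns every edge increment of `H` into
`δ` times the square of a real coordinate of `f` (`Re f`, `Im f` or `(Re f ± Im f)/√2`), and
s-holomorphicity says that this coordinate is the same at both ends of the edge. Around a black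
face the four diagonal increments of `H` then add up to `δ((Re b - Re a)² + (Re b - Re c)²)`,
where `a`, `b`, `c` are the values of `f` at three corners of the face.
Replacing `f` by `i f` and shifting by one face exchanges the two colours and turns `H` into
`-H`, so superharmonicity on white faces is subharmonicity on black faces.
-/

open Complex

lemma exp_pi_div_four_mul_I_sq : exp (Real.pi / 4 * I) ^ 2 = I := by
  rw [← exp_nat_mul]; convert exp_pi_div_two_mul_I using 2; push_cast; ring

lemma exp_neg_pi_div_four_mul_I_sq : exp (-(Real.pi / 4) * I) ^ 2 = -I := by
  rw [← exp_nat_mul]; convert exp_neg_pi_div_two_mul_I using 2; push_cast; ring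

section LineProj

variable {u : ℂ}

lemma lineProj_of_sq_eq_one (hu : u ^ 2 = 1) (z : ℂ) : lineProj u z = z.re := by
  rw [lineProj, hu, one_mul, add_conj]; push_cast; ring

lemma lineProj_of_sq_eq_neg_one (hu : u ^ 2 = -1) (z : ℂ) : lineProj u z = z.im * I := by
  rw [lineProj, hu, neg_one_mul, ← sub_eq_add_neg, sub_conj]; push_cast; ring

lemma lineProj_of_sq_eq_I (hu : u ^ 2 = I) (z : ℂ) :
    lineProj u z = ((z.re + z.im : ℝ) : ℂ) * ((1 + I) / 2) := by
  apply Complex.ext <;> simp [lineProj, hu] <;> ring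

lemma lineProj_of_sq_eq_neg_I (hu : u ^ 2 = -I) (z : ℂ) :
    lineProj u z = ((z.re - z.im : ℝ) : ℂ) * ((1 - I) / 2) := by
  apply Complex.ext <;> simp [lineProj, hu] <;> ring

lemma lineProj_I_mul {v : ℂ} (huv : v ^ 2 = -u ^ 2) (z : ℂ) :
    lineProj u (I * z) = I * lineProj v z := by
  simp only [lineProj, huv, map_mul, conj_I]; ring_nf

end LineProj

lemma norm_ofReal_mul_sq (r : ℝ) (w : ℂ) : ‖(r : ℂ) * w‖ ^ 2 = r ^ 2 * ‖w‖ ^ 2 := by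
  rw [norm_mul, mul_pow, norm_real, Real.norm_eq_abs, sq_abs]

lemma norm_one_add_I_div_two_sq : ‖(1 + I) / 2‖ ^ 2 = 1 / 2 := by
  rw [Complex.sq_norm, normSq_apply]; norm_num

lemma norm_one_sub_I_div_two_sq : ‖(1 - I) / 2‖ ^ 2 = 1 / 2 := by
  rw [Complex.sq_norm, normSq_apply]; norm_num

lemma uVertEdge_sq (m n : ℤ) : uVertEdge m n ^ 2 = if Even (m + n) then -I else I := by
  unfold uVertEdge
  split_ifs
  exacts [exp_neg_pi_div_four_mul_I_sq, exp_pi_div_four_mul_I_sq]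

lemma uHorEdge_sq (m n : ℤ) : uHorEdge m n ^ 2 = if Even (m + n) then -1 else 1 := by
  unfold uHorEdge
  split_ifs <;> simp

lemma even_add_one_add_iff (m n : ℤ) : Even (m + 1 + n) ↔ ¬Even (m + n) := by
  rw [add_right_comm, Int.even_add_one]

lemma lineProj_uVertEdge_I_mul (m n : ℤ) (z : ℂ) :
    lineProj (uVertEdge m n) (I * z) = I * lineProj (uVertEdge (m + 1) n) z := by
  refine lineProj_I_mul ?_ z
  simp only [uVertEdge_sq, even_add_one_add_iff]
  split_ifs <;> simp

lemma lineProj_uHorEdge_I_mul (m n : ℤ) (z : ℂ) :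
    lineProj (uHorEdge m n) (I * z) = I * lineProj (uHorEdge (m + 1) n) z := by
  refine lineProj_I_mul ?_ z
  simp only [uHorEdge_sq, even_add_one_add_iff]
  split_ifs <;> simp

section Parity

variable {m n : ℤ} (z : ℂ)

lemma lineProj_uVertEdge_of_even (h : Even (m + n)) :
    lineProj (uVertEdge m n) z = ((z.re - z.im : ℝ) : ℂ) * ((1 - I) / 2) :=
  lineProj_of_sq_eq_neg_I (by rw [uVertEdge_sq, if_pos h]) z

lemma lineProj_uVertEdge_of_odd (h : ¬Even (m + n)) :
    lineProj (uVertEdge m n) z = ((z.re + z.im : ℝ) : ℂ) * ((1 + I) / 2) :=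
  lineProj_of_sq_eq_I (by rw [uVertEdge_sq, if_neg h]) z

lemma lineProj_uHorEdge_of_even (h : Even (m + n)) :
    lineProj (uHorEdge m n) z = z.im * I :=
  lineProj_of_sq_eq_neg_one (by rw [uHorEdge_sq, if_pos h]) z

lemma lineProj_uHorEdge_of_odd (h : ¬Even (m + n)) :
    lineProj (uHorEdge m n) z = z.re :=
  lineProj_of_sq_eq_one (by rw [uHorEdge_sq, if_neg h]) z

end Parity

def IsSHolomorphic (f : ℤ × ℤ → ℂ) : Prop :=
  ∀ m n : ℤ,
    lineProj (uVertEdge m n) (f (m, n)) = lineProj (uVertEdge m n) (f (m, n - 1)) ∧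
    lineProj (uHorEdge m n) (f (m, n)) = lineProj (uHorEdge m n) (f (m - 1, n))

def diagLaplacian (H : ℤ × ℤ → ℝ) (m n : ℤ) : ℝ :=
  (H (m + 1, n + 1) - H (m, n)) + (H (m + 1, n - 1) - H (m, n))
    + (H (m - 1, n + 1) - H (m, n)) + (H (m - 1, n - 1) - H (m, n))

section Lattice

variable {δ : ℝ} {f : ℤ × ℤ → ℂ} {H : ℤ × ℤ → ℝ} {m n : ℤ}

namespace IsSHolomorphic

lemma coords_eq_of_even (hf : IsSHolomorphic f) (h : Even (m + n)) :
    (f (m, n)).re - (f (m, n)).im = (f (m, n - 1)).re - (f (m, n - 1)).im ∧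
      (f (m, n)).im = (f (m - 1, n)).im := by
  obtain ⟨hV, hH⟩ := hf m n
  simp only [lineProj_uVertEdge_of_even _ h, lineProj_uHorEdge_of_even _ h] at hV hH
  refine ⟨ofReal_injective (mul_right_cancel₀ ?_ hV),
    ofReal_injective (mul_right_cancel₀ I_ne_zero hH)⟩
  simp [Complex.ext_iff]

lemma coords_eq_of_odd (hf : IsSHolomorphic f) (h : ¬Even (m + n)) :
    (f (m, n)).re + (f (m, n)).im = (f (m, n - 1)).re + (f (m, n - 1)).im ∧
      (f (m, n)).re = (f (m - 1, n)).re := by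
  obtain ⟨hV, hH⟩ := hf m n
  simp only [lineProj_uVertEdge_of_odd _ h, lineProj_uHorEdge_of_odd _ h] at hV hH
  refine ⟨ofReal_injective (mul_right_cancel₀ ?_ hV), ofReal_injective hH⟩
  simp [Complex.ext_iff]

lemma I_mul_shift (hf : IsSHolomorphic f) : IsSHolomorphic (fun p ↦ I * f (p.1 + 1, p.2)) := by
  intro m n
  obtain ⟨hV, hH⟩ := hf (m + 1) n
  rw [add_sub_cancel_right] at hH
  simp only [lineProj_uVertEdge_I_mul, lineProj_uHorEdge_I_mul, sub_add_cancel, hV, hH, and_self]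

end IsSHolomorphic

namespace IsPrimitiveOfImFSq

lemma increments_of_even (hH : IsPrimitiveOfImFSq δ f H) (h : Even (m + n)) :
    H (m, n) - H (m + 1, n) = δ * ((f (m, n)).re - (f (m, n)).im) ^ 2 / 2 ∧
      H (m, n) - H (m, n + 1) = δ * (f (m, n)).im ^ 2 := by
  obtain ⟨hV, hH⟩ := hH m n
  rw [if_pos h, lineProj_uVertEdge_of_even _ h, norm_ofReal_mul_sq,
    norm_one_sub_I_div_two_sq] at hV
  rw [if_pos h, lineProj_uHorEdge_of_even _ h, norm_ofReal_mul_sq, norm_I, one_pow, mul_one] at hH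
  constructor <;> linarith

lemma increments_of_odd (hH : IsPrimitiveOfImFSq δ f H) (h : ¬Even (m + n)) :
    H (m + 1, n) - H (m, n) = δ * ((f (m, n)).re + (f (m, n)).im) ^ 2 / 2 ∧
      H (m, n + 1) - H (m, n) = δ * (f (m, n)).re ^ 2 := by
  obtain ⟨hV, hH⟩ := hH m n
  rw [if_neg h, lineProj_uVertEdge_of_odd _ h, norm_ofReal_mul_sq,
    norm_one_add_I_div_two_sq] at hV
  rw [if_neg h, lineProj_uHorEdge_of_odd _ h, norm_real, Real.norm_eq_abs, sq_abs] at hH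
  constructor <;> linarith

lemma neg_shift (hH : IsPrimitiveOfImFSq δ f H) :
    IsPrimitiveOfImFSq δ (fun p ↦ I * f (p.1 + 1, p.2)) (fun p ↦ -H (p.1 + 1, p.2)) := by
  intro m n
  obtain ⟨hV, hH⟩ := hH (m + 1) n
  simp only [lineProj_uVertEdge_I_mul, lineProj_uHorEdge_I_mul, norm_mul, norm_I, one_mul]
  simp only [even_add_one_add_iff] at hV hH
  split_ifs at hV hH ⊢ <;> constructor <;> linarith

end IsPrimitiveOfImFSq

lemma diagLaplacian_neg_shift (H : ℤ × ℤ → ℝ) (m n : ℤ) :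
    diagLaplacian (fun p ↦ -H (p.1 + 1, p.2)) (m - 1) n = -diagLaplacian H m n := by
  simp only [diagLaplacian, sub_add_cancel]
  ring

theorem diagLaplacian_nonneg_of_even (hδ : 0 ≤ δ) (hf : IsSHolomorphic f)
    (hH : IsPrimitiveOfImFSq δ f H) (h : Even (m + n)) : 0 ≤ diagLaplacian H m n := by
  obtain ⟨e₁, -⟩ := hH.increments_of_even h
  obtain ⟨-, e₂⟩ := hH.increments_of_odd (m := m + 1) (n := n) (by grind)
  obtain ⟨e₃, e₄⟩ := hH.increments_of_odd (m := m) (n := n - 1) (by grind)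
  obtain ⟨e₅, e₆⟩ := hH.increments_of_odd (m := m - 1) (n := n) (by grind)
  obtain ⟨e₇, -⟩ := hH.increments_of_even (m := m - 1) (n := n - 1) (by grind)
  obtain ⟨c₁, c₂⟩ := hf.coords_eq_of_even h
  obtain ⟨-, c₃⟩ := hf.coords_eq_of_odd (m := m + 1) (n := n) (by grind)
  obtain ⟨-, c₄⟩ := hf.coords_eq_of_odd (m := m) (n := n - 1) (by grind)
  obtain ⟨c₅, -⟩ := hf.coords_eq_of_odd (m := m - 1) (n := n) (by grind)
  simp only [sub_add_cancel, add_sub_cancel_right] at e₄ e₅ e₇ c₃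
  have hb : (f (m, n - 1)).im = (f (m, n - 1)).re - (f (m, n)).re + (f (m, n)).im := by linarith
  have hd : (f (m - 1, n - 1)).im = (f (m - 1, n)).re + (f (m, n)).im - (f (m, n - 1)).re := by
    linarith
  rw [c₃] at e₂
  rw [hb] at e₃
  rw [← c₂] at e₅
  rw [← c₄, hd] at e₇
  have key : diagLaplacian H m n = δ * (((f (m, n - 1)).re - (f (m, n)).re) ^ 2
      + ((f (m, n - 1)).re - (f (m - 1, n)).re) ^ 2) := by
    unfold diagLaplacian
    linear_combination e₂ - e₁ + e₃ - 2 * e₄ + e₆ - e₅ + e₇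
  rw [key]
  positivity

end Lattice

/-- **`H^•` is subharmonic and `H^∘` is superharmonic.**
Let `f` be s-holomorphic on the medial lattice of mesh `δ` and let `H` be the
associated primitive of `Im(f² dz)` on faces.  Then on every black face (`m + n` even)
the sum of the increments of `H` to the four neighbouring black faces is `≥ 0`
(subharmonicity of `H^•`), while on every white face (`m + n` odd) the analogous sum is
`≤ 0` (superharmonicity of `H^∘`). -/
theorem primitive_subharmonic_superharmonic (δ : ℝ) (hδ : 0 < δ) (f : ℤ × ℤ → ℂ)
    (hsV : ∀ m n : ℤ,
      lineProj (uVertEdge m n) (f (m, n)) = lineProj (uVertEdge m n) (f (m, n - 1)))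
    (hsH : ∀ m n : ℤ,
      lineProj (uHorEdge m n) (f (m, n)) = lineProj (uHorEdge m n) (f (m - 1, n)))
    (H : ℤ × ℤ → ℝ) (hH : IsPrimitiveOfImFSq δ f H) :
    ∀ m n : ℤ,
      (Even (m + n) →
        0 ≤ (H (m + 1, n + 1) - H (m, n)) + (H (m + 1, n - 1) - H (m, n))
            + (H (m - 1, n + 1) - H (m, n)) + (H (m - 1, n - 1) - H (m, n))) ∧
      (¬ Even (m + n) →
        (H (m + 1, n + 1) - H (m, n)) + (H (m + 1, n - 1) - H (m, n))
            + (H (m - 1, n + 1) - H (m, n)) + (H (m - 1, n - 1) - H (m, n)) ≤ 0) := by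
  have hf : IsSHolomorphic f := fun m n ↦ ⟨hsV m n, hsH m n⟩
  intro m n
  refine ⟨diagLaplacian_nonneg_of_even hδ.le hf hH, fun hodd ↦ ?_⟩
  have h := diagLaplacian_nonneg_of_even (m := m - 1) (n := n) hδ.le hf.I_mul_shift hH.neg_shift
    (by grind)
  rw [diagLaplacian_neg_shift] at h
  exact neg_nonneg.mp h
end
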